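/- (Limits of the denominator terms d₃ and d₄ in the proof of Proposition 3.) Let v : (0,1] → ℝ be Lipschitz with 0 < v(r) and sup_{r∈(0,1]} |v(r)| < ∞, let α ∈ ℝ and l ∈ (0,1), and suppose a_n/n → r⁰ ∈ (0,1) and q/n → 0. Then, as n → ∞, (1/q) Σ_{t=a_n+1}^{a_n+q} ( v(t/n) + α·1_{t ≥ a_n+⌊lq⌋+1} )² ε_t⁴ converges in probability to E[ε_1⁴]·( v(r⁰)² + α(1−l)(α + 2 v(r⁰)) ), and (1/q) Σ_{t=a_n+1}^{a_n+q} ( v(t/n) + α·1_{t ≥ a_n+⌊lq⌋+1} ) ε_t² converges in probability to v(r⁰) + α(1−l). -/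

import Mathlib

open MeasureTheory ProbabilityTheory Filter Finset Topology

/-!
Both sums are weighted averages `q⁻¹ ∑ c_{n,t} Y_t` of i.i.d. integrable variables
(`Y_t = ε_t⁴` or `ε_t²`) over the window `(a_n, a_n + q_n]`. Split the window at the break into
blocks of lengths `m_n = ⌊l q_n⌋` and `q_n - m_n`, both tending to infinity. On each block the
weights converge uniformly (`v` is continuous at `r⁰` and `t/n → r⁰` uniformly on the window), and
by the `L¹` law of large numbers (applied to blocks, which are distributed like initial segments)
block averages of `Y` converge to `E Y` in `L¹`. Working in the Banach space `L¹`, a weighted block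
average then converges to (limit weight) • `E Y`, and the whole window to the `l : 1 - l` mixture
of the two blocks; `L¹` convergence gives convergence in probability.
-/

/-- Convergence along `blockFilter b m` means convergence as `n → ∞`, uniformly in
`t ∈ (b n, b n + m n]`. -/
def blockFilter (b m : ℕ → ℕ) : Filter (ℕ × ℕ) :=
  comap Prod.fst atTop ⊓ 𝓟 {p | p.2 ∈ Ioc (b p.1) (b p.1 + m p.1)}

section Blocks

variable {b m : ℕ → ℕ}

theorem eventually_mem_blockFilter :
    ∀ᶠ p in blockFilter b m, p.2 ∈ Ioc (b p.1) (b p.1 + m p.1) :=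
  mem_inf_of_right (mem_principal_self _)

theorem eventually_blockFilter_iff {P : ℕ × ℕ → Prop} :
    (∀ᶠ p in blockFilter b m, P p) ↔ ∀ᶠ n in atTop, ∀ t ∈ Ioc (b n) (b n + m n), P (n, t) := by
  simp only [blockFilter, eventually_inf_principal, eventually_comap]
  refine eventually_congr (Eventually.of_forall fun n => ⟨fun h t ht => h (n, t) rfl ht, ?_⟩)
  rintro h ⟨n', t⟩ rfl
  exact h t

theorem blockFilter_mono {b' m' : ℕ → ℕ}
    (h : ∀ n, Ioc (b' n) (b' n + m' n) ⊆ Ioc (b n) (b n + m n)) :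
    blockFilter b' m' ≤ blockFilter b m :=
  inf_le_inf_left _ (principal_mono.2 fun p hp => h p.1 hp)

theorem tendsto_comp_fst_blockFilter {α : Type*} {f : ℕ → α} {l : Filter α}
    (hf : Tendsto f atTop l) : Tendsto (fun p : ℕ × ℕ => f p.1) (blockFilter b m) l :=
  (hf.comp tendsto_comap).mono_left inf_le_left

theorem tendsto_div_blockFilter {r : ℝ} (hb : Tendsto (fun n : ℕ => (b n : ℝ) / n) atTop (𝓝 r))
    (hm : Tendsto (fun n : ℕ => (m n : ℝ) / n) atTop (𝓝 0)) :
    Tendsto (fun p : ℕ × ℕ => (p.2 : ℝ) / p.1) (blockFilter b m) (𝓝 r) := by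
  have hupper : Tendsto (fun n : ℕ => ((b n + m n : ℕ) : ℝ) / n) atTop (𝓝 r) := by
    simpa [add_div] using hb.add hm
  refine tendsto_of_tendsto_of_tendsto_of_le_of_le' (tendsto_comp_fst_blockFilter hb)
    (tendsto_comp_fst_blockFilter hupper) ?_ ?_ <;>
  filter_upwards [eventually_mem_blockFilter] with p hp <;>
  obtain ⟨hlow, hup⟩ := mem_Ioc.1 hp
  · exact div_le_div_of_nonneg_right (by exact_mod_cast hlow.le) p.1.cast_nonneg
  · exact div_le_div_of_nonneg_right (by exact_mod_cast hup) p.1.cast_nonneg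

theorem tendsto_add_ite_blockFilter_left {q : ℕ → ℕ} (hmq : ∀ n, m n ≤ q n) {g : ℕ × ℕ → ℝ}
    {L : ℝ} (hg : Tendsto g (blockFilter b q) (𝓝 L)) (α : ℝ) :
    Tendsto (fun p => g p + if b p.1 + m p.1 + 1 ≤ p.2 then α else 0) (blockFilter b m) (𝓝 L) := by
  have hstep : (fun p : ℕ × ℕ => if b p.1 + m p.1 + 1 ≤ p.2 then α else 0) =ᶠ[blockFilter b m]
      fun _ => 0 := by
    filter_upwards [eventually_mem_blockFilter] with p hp
    exact if_neg (by rw [mem_Ioc] at hp; omega)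
  simpa using (hg.mono_left (blockFilter_mono fun n =>
    Ioc_subset_Ioc_right (by simp [hmq n]))).add (tendsto_const_nhds.congr' hstep.symm)

theorem tendsto_add_ite_blockFilter_right {q : ℕ → ℕ} (hmq : ∀ n, m n ≤ q n) {g : ℕ × ℕ → ℝ}
    {L : ℝ} (hg : Tendsto g (blockFilter b q) (𝓝 L)) (α : ℝ) :
    Tendsto (fun p => g p + if b p.1 + m p.1 + 1 ≤ p.2 then α else 0)
      (blockFilter (fun n => b n + m n) (fun n => q n - m n)) (𝓝 (L + α)) := by
  have hstep : (fun p : ℕ × ℕ => if b p.1 + m p.1 + 1 ≤ p.2 then α else 0)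
      =ᶠ[blockFilter (fun n => b n + m n) (fun n => q n - m n)] fun _ => α := by
    filter_upwards [eventually_mem_blockFilter] with p hp
    exact if_pos (by rw [mem_Ioc] at hp; omega)
  exact (hg.mono_left (blockFilter_mono fun n => Ioc_subset_Ioc (Nat.le_add_right _ _)
    (by have := hmq n; omega))).add (tendsto_const_nhds.congr' hstep.symm)

end Blocks

theorem tendsto_sub_floor_mul_atTop {q : ℕ → ℕ} (hq : Tendsto q atTop atTop) {l : ℝ}
    (hl₀ : 0 ≤ l) (hl₁ : l < 1) : Tendsto (fun n => q n - ⌊l * q n⌋₊) atTop atTop := by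
  refine tendsto_atTop_mono (fun n => Nat.floor_le_of_le ?_) (tendsto_nat_floor_atTop.comp
    ((tendsto_natCast_atTop_atTop.comp hq).const_mul_atTop (sub_pos.2 hl₁)))
  have hfloor : (⌊l * q n⌋₊ : ℝ) ≤ l * q n := Nat.floor_le (by positivity)
  rw [Function.comp_apply,
    Nat.cast_sub (Nat.floor_le_of_le (mul_le_of_le_one_left (Nat.cast_nonneg _) hl₁.le))]
  linarith

section NormedSpace

variable {E : Type*} [NormedAddCommGroup E] [NormedSpace ℝ E]

theorem norm_inv_card_smul_sum_smul_le {ι : Type*} (s : Finset ι) (a : ι → ℝ) (Z : ι → E)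
    {η R : ℝ} (hη : 0 ≤ η) (hR : 0 ≤ R) (ha : ∀ i ∈ s, |a i| ≤ η) (hZ : ∀ i ∈ s, ‖Z i‖ ≤ R) :
    ‖(#s : ℝ)⁻¹ • ∑ i ∈ s, a i • Z i‖ ≤ η * R := by
  have hsum : ‖∑ i ∈ s, a i • Z i‖ ≤ #s * (η * R) := by
    simpa using norm_sum_le_of_le s fun i hi => (norm_smul (a i) (Z i)).trans_le
      (mul_le_mul (ha i hi) (hZ i hi) (norm_nonneg _) ((abs_nonneg _).trans (ha i hi)))
  rcases (#s).eq_zero_or_pos with h0 | hpos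
  · simp_all [mul_nonneg]
  rw [norm_smul, norm_inv, Real.norm_natCast, inv_mul_le_iff₀ (by exact_mod_cast hpos)]
  exact hsum

theorem tendsto_weighted_blockAverage (Z : ℕ → E) {R : ℝ} (hZ : ∀ t, ‖Z t‖ ≤ R)
    {b m : ℕ → ℕ} {z : E}
    (havg : Tendsto (fun n => (m n : ℝ)⁻¹ • ∑ t ∈ Ioc (b n) (b n + m n), Z t) atTop (𝓝 z))
    {c : ℕ → ℕ → ℝ} {C : ℝ} (hc : Tendsto (Function.uncurry c) (blockFilter b m) (𝓝 C)) :
    Tendsto (fun n => (m n : ℝ)⁻¹ • ∑ t ∈ Ioc (b n) (b n + m n), c n t • Z t) atTop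
      (𝓝 (C • z)) := by
  have hR : 0 ≤ R := (norm_nonneg _).trans (hZ 0)
  have hsplit : ∀ n, (m n : ℝ)⁻¹ • ∑ t ∈ Ioc (b n) (b n + m n), c n t • Z t =
      (m n : ℝ)⁻¹ • ∑ t ∈ Ioc (b n) (b n + m n), (c n t - C) • Z t +
        C • ((m n : ℝ)⁻¹ • ∑ t ∈ Ioc (b n) (b n + m n), Z t) := fun n => by
    simp only [sub_smul, sum_sub_distrib, smul_sum, smul_sub, smul_comm C]
    abel
  have herr : Tendsto (fun n => (m n : ℝ)⁻¹ • ∑ t ∈ Ioc (b n) (b n + m n), (c n t - C) • Z t)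
      atTop (𝓝 0) := by
    refine NormedAddGroup.tendsto_nhds_zero.2 fun δ hδ => ?_
    have hη : 0 < δ / (R + 1) := by positivity
    filter_upwards [eventually_blockFilter_iff.1 (Metric.tendsto_nhds.1 hc _ hη)] with n hn
    have hcard : #(Ioc (b n) (b n + m n)) = m n := by simp
    have hbound := norm_inv_card_smul_sum_smul_le _ (fun t => c n t - C) Z hη.le hR
      (fun t ht => (hn t ht).le) (fun t _ => hZ t)
    rw [hcard] at hbound
    calc _ ≤ δ / (R + 1) * R := hbound
      _ < δ := by rw [div_mul_eq_mul_div, div_lt_iff₀ (by positivity)]; nlinarith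
  simpa [hsplit] using herr.add (havg.const_smul C)

theorem div_smul_inv_smul_sum_Ioc (W : ℕ → E) (b m : ℕ) (N : ℝ) :
    ((m : ℝ) / N) • ((m : ℝ)⁻¹ • ∑ t ∈ Ioc b (b + m), W t) = N⁻¹ • ∑ t ∈ Ioc b (b + m), W t := by
  rcases eq_or_ne m 0 with rfl | hm
  · simp
  · rw [smul_smul, div_mul_eq_mul_div, mul_inv_cancel₀ (by exact_mod_cast hm), one_div]

theorem inv_smul_sum_Ioc_add (W : ℕ → E) (b m k : ℕ) :
    ((m + k : ℕ) : ℝ)⁻¹ • ∑ t ∈ Ioc b (b + (m + k)), W t =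
      ((m : ℝ) / (m + k : ℕ)) • ((m : ℝ)⁻¹ • ∑ t ∈ Ioc b (b + m), W t) +
        ((k : ℝ) / (m + k : ℕ)) • ((k : ℝ)⁻¹ • ∑ t ∈ Ioc (b + m) (b + m + k), W t) := by
  rw [div_smul_inv_smul_sum_Ioc, div_smul_inv_smul_sum_Ioc, ← smul_add, ← add_assoc,
    sum_Ioc_consecutive _ (Nat.le_add_right b m) (Nat.le_add_right _ k)]

theorem tendsto_inv_smul_sum_Ioc_add {W : ℕ → ℕ → E} {b m k : ℕ → ℕ} {l : ℝ} {x y : E}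
    (hm : Tendsto (fun n => (m n : ℝ) / (m n + k n : ℕ)) atTop (𝓝 l))
    (hk : Tendsto (fun n => (k n : ℝ) / (m n + k n : ℕ)) atTop (𝓝 (1 - l)))
    (hx : Tendsto (fun n => (m n : ℝ)⁻¹ • ∑ t ∈ Ioc (b n) (b n + m n), W n t) atTop (𝓝 x))
    (hy : Tendsto (fun n => (k n : ℝ)⁻¹ • ∑ t ∈ Ioc (b n + m n) (b n + m n + k n), W n t)
      atTop (𝓝 y)) :
    Tendsto (fun n => ((m n + k n : ℕ) : ℝ)⁻¹ • ∑ t ∈ Ioc (b n) (b n + (m n + k n)), W n t)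
      atTop (𝓝 (l • x + (1 - l) • y)) := by
  simpa only [inv_smul_sum_Ioc_add] using (hm.smul hx).add (hk.smul hy)

end NormedSpace

section Probability

variable {Ω : Type*} {mΩ : MeasurableSpace Ω} {μ : Measure Ω} {p : ENNReal}

theorem sum_toLp {E ι : Type*} [NormedAddCommGroup E] (s : Finset ι) {Y : ι → Ω → E}
    (hY : ∀ i, MemLp (Y i) p μ) :
    ∑ i ∈ s, (hY i).toLp (Y i) = (memLp_finsetSum' s fun i _ => hY i).toLp (∑ i ∈ s, Y i) := by
  classical
  induction s using Finset.induction_on with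
  | empty => simp [MemLp.toLp_zero]
  | insert i s hi ih =>
    simp only [sum_insert hi, ih]
    exact (MemLp.toLp_add _ _).symm

theorem integrable_sq_of_integrable_pow_four [IsFiniteMeasure μ] {X : Ω → ℝ}
    (hX : AEStronglyMeasurable X μ) (h : Integrable (fun ω => X ω ^ 4) μ) :
    Integrable (fun ω => X ω ^ 2) μ := by
  simpa [Real.norm_eq_abs] using integrable_norm_pow_of_le hX (by norm_num : 2 ≤ 4)
    (by simpa [Real.norm_eq_abs, (by decide : Even 4).pow_abs] using h)

theorem identDistrib_sum_Ioc_sum_range {E : Type*} [AddCommMonoid E] [MeasurableSpace E]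
    [MeasurableAdd₂ E] {Y : ℕ → Ω → E} (hind : iIndepFun Y μ)
    (hid : ∀ i, IdentDistrib (Y i) (Y 0) μ μ) (b m : ℕ) :
    IdentDistrib (fun ω => ∑ t ∈ Ioc b (b + m), Y t ω) (fun ω => ∑ i ∈ range m, Y i ω) μ μ := by
  have hshift : IdentDistrib (fun ω i => Y (b + 1 + i) ω) (fun ω i => Y i ω) μ μ :=
    .pi (fun i => (hid _).trans (hid i).symm) (hind.precomp (add_right_injective _)) hind
  have hsum : Measurable fun x : ℕ → E => ∑ i ∈ range m, x i :=
    Finset.measurable_sum _ fun i _ => measurable_pi_apply i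
  have hreindex : (fun ω => ∑ t ∈ Ioc b (b + m), Y t ω) =
      fun ω => ∑ i ∈ range m, Y (b + 1 + i) ω := by
    ext ω
    rw [← Ico_add_one_add_one_eq_Ioc, sum_Ico_eq_sum_range, add_right_comm, Nat.add_sub_cancel_left]
  rw [hreindex]
  exact hshift.comp hsum

variable {E : Type*} [NormedAddCommGroup E] [NormedSpace ℝ E] [CompleteSpace E]
  [MeasurableSpace E] [BorelSpace E] [SecondCountableTopology E]

theorem tendsto_eLpNorm_blockAverage_sub (hp : 1 ≤ p) (hp' : p ≠ ⊤) {Y : ℕ → Ω → E}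
    (hY : MemLp (Y 0) p μ) (hind : iIndepFun Y μ) (hid : ∀ i, IdentDistrib (Y i) (Y 0) μ μ)
    {b m : ℕ → ℕ} (hm : Tendsto m atTop atTop) :
    Tendsto (fun n => eLpNorm (fun ω => (m n : ℝ)⁻¹ • ∑ t ∈ Ioc (b n) (b n + m n), Y t ω - μ[Y 0])
      p μ) atTop (𝓝 0) := by
  refine ((strong_law_Lp hp hp' Y hY (fun i j hij => hind.indepFun hij) hid).comp hm).congr
    fun n => ?_
  have haffine : Measurable fun x : E => (m n : ℝ)⁻¹ • x - μ[Y 0] :=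
    (measurable_const_smul _).sub_const _
  exact (((identDistrib_sum_Ioc_sum_range hind hid (b n) (m n)).comp haffine).eLpNorm_eq p).symm

theorem tendsto_blockAverage_toLp [IsFiniteMeasure μ] [Fact (1 ≤ p)] (hp : p ≠ ⊤)
    {Y : ℕ → Ω → E} (hY : ∀ t, MemLp (Y t) p μ) (hind : iIndepFun Y μ)
    (hid : ∀ i, IdentDistrib (Y i) (Y 0) μ μ) {b m : ℕ → ℕ} (hm : Tendsto m atTop atTop) :
    Tendsto (fun n => (m n : ℝ)⁻¹ • ∑ t ∈ Ioc (b n) (b n + m n), (hY t).toLp (Y t)) atTop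
      (𝓝 ((memLp_const μ[Y 0]).toLp fun _ => μ[Y 0])) := by
  simp only [sum_toLp, ← MemLp.toLp_const_smul]
  refine (Lp.tendsto_Lp_iff_tendsto_eLpNorm'' _ _ _ _).2 ?_
  convert tendsto_eLpNorm_blockAverage_sub Fact.out hp (hY 0) hind hid (b := b) hm using 3 with n
  ext ω
  simp [Finset.sum_apply]

theorem tendstoInMeasure_weighted_average_two_blocks [IsProbabilityMeasure μ] {Y : ℕ → Ω → E}
    (hY : Integrable (Y 0) μ) (hind : iIndepFun Y μ) (hid : ∀ i, IdentDistrib (Y i) (Y 0) μ μ)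
    {b m k : ℕ → ℕ} (hm : Tendsto m atTop atTop) (hk : Tendsto k atTop atTop) {l : ℝ}
    (hml : Tendsto (fun n => (m n : ℝ) / (m n + k n : ℕ)) atTop (𝓝 l))
    {c : ℕ → ℕ → ℝ} {C₁ C₂ : ℝ} (hc₁ : Tendsto (Function.uncurry c) (blockFilter b m) (𝓝 C₁))
    (hc₂ : Tendsto (Function.uncurry c) (blockFilter (fun n => b n + m n) k) (𝓝 C₂)) :
    TendstoInMeasure μ
      (fun n ω => ((m n + k n : ℕ) : ℝ)⁻¹ • ∑ t ∈ Ioc (b n) (b n + (m n + k n)), c n t • Y t ω)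
      atTop (fun _ => (l * C₁ + (1 - l) * C₂) • μ[Y 0]) := by
  have hY₁ : ∀ t, MemLp (Y t) 1 μ :=
    fun t => memLp_one_iff_integrable.2 ((hid t).integrable_iff.2 hY)
  have hnorm : ∀ t, ‖(hY₁ t).toLp (Y t)‖ ≤ ‖(hY₁ 0).toLp (Y 0)‖ := fun t => by
    rw [Lp.norm_toLp, Lp.norm_toLp, (hid t).eLpNorm_eq]
  have hkl : Tendsto (fun n => (k n : ℝ) / (m n + k n : ℕ)) atTop (𝓝 (1 - l)) := by
    refine (hml.const_sub 1).congr' ?_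
    filter_upwards [hm.eventually_gt_atTop 0] with n hn
    rw [eq_div_iff (by positivity), sub_mul, div_mul_cancel₀ _ (by positivity)]
    push_cast; ring
  have hLp := tendsto_inv_smul_sum_Ioc_add hml hkl
    (tendsto_weighted_blockAverage _ hnorm (tendsto_blockAverage_toLp ENNReal.one_ne_top hY₁
      hind hid hm) hc₁)
    (tendsto_weighted_blockAverage _ hnorm (tendsto_blockAverage_toLp ENNReal.one_ne_top hY₁
      hind hid hk) hc₂)
  refine (tendstoInMeasure_of_tendsto_Lp hLp).congr (fun n => ?_) ?_
  · change ⇑(_ • ∑ t ∈ _, ((hY₁ t).const_smul (c n t)).toLp (c n t • Y t)) =ᵐ[μ] _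
    rw [sum_toLp, ← MemLp.toLp_const_smul]
    refine (MemLp.coeFn_toLp _).trans (.of_eq ?_)
    ext ω
    simp [Finset.sum_apply]
  · set z : Lp E 1 μ := (memLp_const μ[Y 0]).toLp fun _ => μ[Y 0] with hz
    rw [show l • C₁ • z + (1 - l) • C₂ • z = (l * C₁ + (1 - l) * C₂) • z by module, hz,
      ← MemLp.toLp_const_smul]
    exact MemLp.coeFn_toLp _

theorem tendstoInMeasure_weighted_average_comp_two_blocks [IsProbabilityMeasure μ] {α : Type*}
    [MeasurableSpace α] {ε : ℕ → Ω → α} (hind : iIndepFun ε μ)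
    (hid : ∀ t, IdentDistrib (ε t) (ε 1) μ μ) {g : α → ℝ} (hg : Measurable g)
    (hint : Integrable (fun ω => g (ε 1 ω)) μ) {b q m : ℕ → ℕ} (hmq : ∀ n, m n ≤ q n)
    (hm : Tendsto m atTop atTop) (hk : Tendsto (fun n => q n - m n) atTop atTop) {l : ℝ}
    (hml : Tendsto (fun n => (m n : ℝ) / q n) atTop (𝓝 l))
    {c : ℕ → ℕ → ℝ} {C₁ C₂ : ℝ} (hc₁ : Tendsto (Function.uncurry c) (blockFilter b m) (𝓝 C₁))
    (hc₂ : Tendsto (Function.uncurry c)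
      (blockFilter (fun n => b n + m n) (fun n => q n - m n)) (𝓝 C₂)) :
    TendstoInMeasure μ
      (fun n ω => (q n : ℝ)⁻¹ * ∑ t ∈ Icc (b n + 1) (b n + q n), c n t * g (ε t ω))
      atTop (fun _ => (l * C₁ + (1 - l) * C₂) * ∫ ω, g (ε 1 ω) ∂μ) := by
  have hid₁ : ∀ t, IdentDistrib (fun ω => g (ε t ω)) (fun ω => g (ε 1 ω)) μ μ :=
    fun t => (hid t).comp hg
  have hlim := tendstoInMeasure_weighted_average_two_blocks (Y := fun t ω => g (ε t ω))
    ((hid₁ 0).integrable_iff.2 hint) (hind.comp (fun _ => g) fun _ => hg)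
    (fun t => (hid₁ t).trans (hid₁ 0).symm) hm hk
    (by simpa only [Nat.add_sub_cancel' (hmq _)] using hml) hc₁ hc₂
  rw [(hid₁ 0).integral_eq] at hlim
  simpa only [Nat.add_sub_cancel' (hmq _), Icc_add_one_left_eq_Ioc, smul_eq_mul] using hlim

end Probability

theorem denominator_terms_limits_general
    {Ω : Type*} [MeasureSpace Ω] [IsProbabilityMeasure (ℙ : Measure Ω)]
    (ε : ℕ → Ω → ℝ)
    (hindep : iIndepFun ε ℙ)
    (hid : ∀ t, IdentDistrib (ε t) (ε 1) ℙ ℙ)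
    (hvar : ∫ ω, (ε 1 ω) ^ 2 ∂ℙ = 1)
    (hmom4 : Integrable (fun ω => (ε 1 ω) ^ 4) ℙ)
    (γ : ℝ) (hγ : γ ∈ Set.Ioo (0:ℝ) 1)
    (a q : ℕ → ℕ)
    (hq : ∀ n, q n = ⌊(n : ℝ) ^ γ⌋₊)
    (v : ℝ → ℝ)
    (hv_lip : ∃ K, LipschitzOnWith K v (Set.Ioc (0:ℝ) 1))
    (α : ℝ) (l : ℝ) (hl : l ∈ Set.Ioo (0:ℝ) 1)
    (r0 : ℝ) (hr0 : r0 ∈ Set.Ioo (0:ℝ) 1)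
    (ha_lim : Tendsto (fun (n : ℕ) => (a n : ℝ) / n) atTop (nhds r0))
    (hq_lim : Tendsto (fun (n : ℕ) => (q n : ℝ) / n) atTop (nhds 0)) :
    TendstoInMeasure ℙ
      (fun (n : ℕ) ω => (q n : ℝ)⁻¹ *
        ∑ t ∈ Finset.Icc (a n + 1) (a n + q n),
          (v ((t : ℝ) / n) + (if a n + ⌊l * (q n : ℝ)⌋₊ + 1 ≤ t then α else 0)) ^ 2 *
            (ε t ω) ^ 4)
      atTop
      (fun _ => (∫ ω, (ε 1 ω) ^ 4 ∂ℙ) *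
        ((v r0) ^ 2 + α * (1 - l) * (α + 2 * v r0))) ∧
    TendstoInMeasure ℙ
      (fun (n : ℕ) ω => (q n : ℝ)⁻¹ *
        ∑ t ∈ Finset.Icc (a n + 1) (a n + q n),
          (v ((t : ℝ) / n) + (if a n + ⌊l * (q n : ℝ)⌋₊ + 1 ≤ t then α else 0)) *
            (ε t ω) ^ 2)
      atTop (fun _ => v r0 + α * (1 - l)) := by
  obtain ⟨K, hK⟩ := hv_lip
  set m : ℕ → ℕ := fun n => ⌊l * (q n : ℝ)⌋₊
  have hq_top : Tendsto q atTop atTop := (tendsto_nat_floor_atTop.comp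
    ((tendsto_rpow_atTop hγ.1).comp tendsto_natCast_atTop_atTop)).congr fun n => (hq n).symm
  have hmq : ∀ n, m n ≤ q n := fun n =>
    Nat.floor_le_of_le (mul_le_of_le_one_left (Nat.cast_nonneg _) hl.2.le)
  have hml : Tendsto (fun n => (m n : ℝ) / q n) atTop (𝓝 l) :=
    (tendsto_nat_floor_mul_div_atTop hl.1.le).comp (tendsto_natCast_atTop_atTop.comp hq_top)
  have hv : Tendsto (fun p : ℕ × ℕ => v (p.2 / p.1)) (blockFilter a q) (𝓝 (v r0)) :=
    ((hK.continuousOn.continuousAt (mem_of_superset (Ioo_mem_nhds hr0.1 hr0.2)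
      Set.Ioo_subset_Ioc_self)).tendsto).comp (tendsto_div_blockFilter ha_lim hq_lim)
  have hweighted : ∀ f g : ℝ → ℝ, Continuous f → Measurable g → Integrable (fun ω => g (ε 1 ω)) →
      TendstoInMeasure ℙ (fun n ω => (q n : ℝ)⁻¹ * ∑ t ∈ Icc (a n + 1) (a n + q n),
        f (v (t / n) + if a n + m n + 1 ≤ t then α else 0) * g (ε t ω)) atTop
        (fun _ => (l * f (v r0) + (1 - l) * f (v r0 + α)) * ∫ ω, g (ε 1 ω)) :=
    fun f g hf hg hint => tendstoInMeasure_weighted_average_comp_two_blocks hindep hid hg hint hmq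
      (tendsto_nat_floor_atTop.comp
        ((tendsto_natCast_atTop_atTop.comp hq_top).const_mul_atTop hl.1))
      (tendsto_sub_floor_mul_atTop hq_top hl.1.le hl.2) hml
      ((hf.tendsto _).comp (tendsto_add_ite_blockFilter_left hmq hv α))
      ((hf.tendsto _).comp (tendsto_add_ite_blockFilter_right hmq hv α))
  constructor
  · convert hweighted (· ^ 2) (· ^ 4) (continuous_pow 2) (measurable_id.pow_const 4) hmom4 using 2
    ring
  · convert hweighted (fun x => x) (· ^ 2) continuous_id (measurable_id.pow_const 2)
      (integrable_sq_of_integrable_pow_four (hid 1).aemeasurable_fst.aestronglyMeasurable hmom4)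
      using 2
    rw [hvar]
    ring

/-- limits of the denominator terms `d₃` and `d₄` in the proof of
Proposition 3. Under the break model with smooth part `v` and break of size `α` at
`t = a_n + ⌊lq⌋ + 1`, with `a_n/n → r⁰` and `q/n → 0`,
`(1/q) ∑ (v(t/n) + α 1_{break})² ε_t⁴ → E[ε₁⁴](v(r⁰)² + α(1−l)(α+2v(r⁰)))` and
`(1/q) ∑ (v(t/n) + α 1_{break}) ε_t² → v(r⁰) + α(1−l)` in probability. -/
theorem denominator_terms_limits
    {Ω : Type*} [MeasureSpace Ω] [IsProbabilityMeasure (ℙ : Measure Ω)]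
    (ε : ℕ → Ω → ℝ) (hmeas : ∀ t, Measurable (ε t))
    (hindep : iIndepFun ε ℙ)
    (hid : ∀ t, IdentDistrib (ε t) (ε 1) ℙ ℙ)
    (hvar : ∫ ω, (ε 1 ω) ^ 2 ∂ℙ = 1)
    (hmom4 : Integrable (fun ω => (ε 1 ω) ^ 4) ℙ)
    (γ : ℝ) (hγ : γ ∈ Set.Ioo (0:ℝ) 1)
    (r : ℕ → ℝ) (hr : ∀ n, r n ∈ Set.Ioo (0:ℝ) 1)
    (a q : ℕ → ℕ)
    (ha : ∀ n, a n = ⌊r n * n⌋₊)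
    (hq : ∀ n, q n = ⌊(n : ℝ) ^ γ⌋₊)
    (h_sub : ∀ n, a n + q n ≤ n)
    (v : ℝ → ℝ)
    (hv_pos : ∀ x ∈ Set.Ioc (0:ℝ) 1, 0 < v x)
    (hv_bdd : ∃ M, ∀ x ∈ Set.Ioc (0:ℝ) 1, |v x| ≤ M)
    (hv_lip : ∃ K, LipschitzOnWith K v (Set.Ioc (0:ℝ) 1))
    (α : ℝ) (l : ℝ) (hl : l ∈ Set.Ioo (0:ℝ) 1)
    (r0 : ℝ) (hr0 : r0 ∈ Set.Ioo (0:ℝ) 1)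
    (ha_lim : Tendsto (fun (n : ℕ) => (a n : ℝ) / n) atTop (nhds r0))
    (hq_lim : Tendsto (fun (n : ℕ) => (q n : ℝ) / n) atTop (nhds 0)) :
    TendstoInMeasure ℙ
      (fun (n : ℕ) ω => (q n : ℝ)⁻¹ *
        ∑ t ∈ Finset.Icc (a n + 1) (a n + q n),
          (v ((t : ℝ) / n) + (if a n + ⌊l * (q n : ℝ)⌋₊ + 1 ≤ t then α else 0)) ^ 2 *
            (ε t ω) ^ 4)
      atTop
      (fun _ => (∫ ω, (ε 1 ω) ^ 4 ∂ℙ) *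
        ((v r0) ^ 2 + α * (1 - l) * (α + 2 * v r0))) ∧
    TendstoInMeasure ℙ
      (fun (n : ℕ) ω => (q n : ℝ)⁻¹ *
        ∑ t ∈ Finset.Icc (a n + 1) (a n + q n),
          (v ((t : ℝ) / n) + (if a n + ⌊l * (q n : ℝ)⌋₊ + 1 ≤ t then α else 0)) *
            (ε t ω) ^ 2)
      atTop (fun _ => v r0 + α * (1 - l)) :=
  denominator_terms_limits_general ε hindep hid hvar hmom4 γ hγ a q hq v hv_lip α l hl r0 hr0 ha_lim
    hq_lim
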